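/- Suppose all points of S = R ∪ B ∪ P lie on a common circle. Then in a minimum red-blue-purple spanning graph of (R,B,P), no red or blue edge crosses the line segment joining any pair of purple points: for every red or blue edge uv of the graph and every two distinct purple points p, p' ∈ P, the segments uv and pp' do not intersect in a point lying in the relative interior of both segments. -/

import Mathlib

open scoped Classical

noncomputable section

/-- The Euclidean plane. -/
abbrev Pt : Type := EuclideanSpace ℝ (Fin 2)

/-- The simple graph on the plane whose edge set is the finite set `E`. -/
def graphOf (E : Finset (Sym2 Pt)) : SimpleGraph Pt where
  Adj x y := x ≠ y ∧ s(x, y) ∈ E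
  symm := ⟨fun x y ⟨hne, he⟩ => ⟨hne.symm, by rwa [Sym2.eq_swap]⟩⟩
  loopless := ⟨fun x ⟨hne, _⟩ => hne rfl⟩

/-- Euclidean length of an edge. -/
def edgeLen (e : Sym2 Pt) : ℝ :=
  Sym2.lift ⟨fun x y => dist x y, fun _ _ => dist_comm _ _⟩ e

/-- Total Euclidean length of a finite edge set. -/
def weight (E : Finset (Sym2 Pt)) : ℝ := ∑ e ∈ E, edgeLen e

/-- `E` is the edge set of a red-blue-purple spanning graph of `(R, B, P)`. -/
def IsRBP (R B P : Finset Pt) (E : Finset (Sym2 Pt)) : Prop :=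
  (∀ e ∈ E, ¬ e.IsDiag) ∧
  (∀ e ∈ E, ∀ x ∈ e, x ∈ R ∪ B ∪ P) ∧
  ((graphOf E).induce (↑(R ∪ P) : Set Pt)).Connected ∧
  ((graphOf E).induce (↑(B ∪ P) : Set Pt)).Connected

/-- `E` is the edge set of a minimum red-blue-purple spanning graph of `(R, B, P)`. -/
def IsMinRBP (R B P : Finset Pt) (E : Finset (Sym2 Pt)) : Prop :=
  IsRBP R B P E ∧ ∀ E', IsRBP R B P E' → weight E ≤ weight E'

/-- Two segments cross: they meet in a point in the relative interior (open
segment) of both. -/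
def Crosses (u v w x : Pt) : Prop :=
  ∃ z : Pt, z ∈ openSegment ℝ u v ∧ z ∈ openSegment ℝ w x

/-!
If a red edge `uv` with `u ∈ R` crossed the chord `pq` between two purple points,
then one of `p`, `q` sees the chord `uv` at an angle of at least `π/2`: the power of a point
with respect to the circle minus its power `⟪x - u, x - v⟫` with respect to the Thales circle
over `uv` is affine in `x`, and it takes the same value at `u`, `v`, hence at the crossing
point, which is a convex combination of `p` and `q`. That purple point `w` is strictly closer
to both `u` and `v` than they are to each other. Deleting `uv` splits the red graph into at
most two pieces, one containing `u` and one containing `v`; joining `w` to the endpoint on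
the other side from `w` reconnects it, keeps the blue graph intact (`uv` is not blue), and
strictly lowers the weight.
-/

open Metric SimpleGraph
open scoped RealInnerProductSpace

section Chords

variable {V : Type*} [NormedAddCommGroup V] [InnerProductSpace ℝ V]

theorem inner_sub_sub_sub_norm_sub_sq_of_add_eq_one (u v o p q : V) {a b : ℝ}
    (hab : a + b = 1) :
    ⟪a • p + b • q - u, a • p + b • q - v⟫ - ‖a • p + b • q - o‖ ^ 2 =
      a * (⟪p - u, p - v⟫ - ‖p - o‖ ^ 2) + b * (⟪q - u, q - v⟫ - ‖q - o‖ ^ 2) := by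
  obtain rfl : b = 1 - a := by linarith
  simp only [← real_inner_self_eq_norm_sq, inner_sub_left, inner_sub_right, inner_add_left,
    inner_add_right, inner_smul_left, inner_smul_right, RCLike.conj_to_real]
  ring

theorem mul_inner_add_mul_inner_eq_zero_of_mem_sphere {o u v p q : V} {r a b c d : ℝ}
    (hu : u ∈ sphere o r) (hv : v ∈ sphere o r) (hp : p ∈ sphere o r) (hq : q ∈ sphere o r)
    (hab : a + b = 1) (hcd : c + d = 1) (h : a • u + b • v = c • p + d • q) :
    c * ⟪p - u, p - v⟫ + d * ⟪q - u, q - v⟫ = 0 := by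
  have huv := inner_sub_sub_sub_norm_sub_sq_of_add_eq_one u v o u v hab
  have hpq := inner_sub_sub_sub_norm_sub_sq_of_add_eq_one u v o p q hcd
  rw [h] at huv
  simp only [mem_sphere, dist_eq_norm] at hu hv hp hq
  simp only [hu, hv, hp, hq, sub_self, inner_zero_left, inner_zero_right] at huv hpq
  linear_combination huv - hpq + r ^ 2 * hcd - r ^ 2 * hab

theorem dist_sq_add_dist_sq_le_of_inner_nonpos {u v w : V} (h : ⟪w - u, w - v⟫ ≤ 0) :
    dist w u ^ 2 + dist w v ^ 2 ≤ dist u v ^ 2 := by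
  have hcos := norm_sub_sq_real (w - v) (w - u)
  rw [sub_sub_sub_cancel_left, real_inner_comm] at hcos
  rw [dist_eq_norm, dist_eq_norm, dist_eq_norm, hcos]
  linarith

theorem exists_dist_lt_dist_of_mem_sphere {o u v p q z : V} {r : ℝ}
    (hu : u ∈ sphere o r) (hv : v ∈ sphere o r) (hp : p ∈ sphere o r) (hq : q ∈ sphere o r)
    (hzuv : z ∈ segment ℝ u v) (hzpq : z ∈ openSegment ℝ p q)
    (hpq : p ≠ q) (hpu : p ≠ u) (hqu : q ≠ u) :
    ∃ w, (w = p ∨ w = q) ∧ dist w u < dist u v ∧ dist w v < dist u v := by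
  obtain ⟨a, b, -, -, hab, rfl⟩ := hzuv
  obtain ⟨c, d, hc, hd, hcd, hz⟩ := hzpq
  have key := mul_inner_add_mul_inner_eq_zero_of_mem_sphere hu hv hp hq hab hcd hz.symm
  have hinner_v : ∀ w, w = v → ⟪w - u, w - v⟫ = 0 := by
    rintro w rfl
    rw [sub_self, inner_zero_right]
  suffices ∃ w, (w = p ∨ w = q) ∧ w ≠ v ∧ ⟪w - u, w - v⟫ ≤ 0 by
    obtain ⟨w, hw, hwv, hobtuse⟩ := this
    have hwu : w ≠ u := by rcases hw with rfl | rfl <;> assumption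
    have hpyth := dist_sq_add_dist_sq_le_of_inner_nonpos hobtuse
    have hwu_pos := dist_pos.2 hwu
    have hwv_pos := dist_pos.2 hwv
    exact ⟨w, hw, by nlinarith [dist_nonneg (x := u) (y := v)],
      by nlinarith [dist_nonneg (x := u) (y := v)]⟩
  rcases lt_or_ge ⟪p - u, p - v⟫ 0 with hp | hp
  · exact ⟨p, .inl rfl, fun h => hp.ne (hinner_v p h), hp.le⟩
  rcases lt_or_ge ⟪q - u, q - v⟫ 0 with hq | hq
  · exact ⟨q, .inr rfl, fun h => hq.ne (hinner_v q h), hq.le⟩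
  by_cases hpv : p = v
  · exact ⟨q, .inr rfl, hpv ▸ hpq.symm, by nlinarith⟩
  · exact ⟨p, .inl rfl, hpv, by nlinarith⟩

end Chords

namespace SimpleGraph

variable {V : Type*} {G H : SimpleGraph V} {u v x : V}

theorem Reachable.reachable_or_reachable_of_le_sup_edge (hGH : G ≤ H ⊔ edge u v)
    (h : G.Reachable x u) : H.Reachable x u ∨ H.Reachable x v := by
  obtain ⟨p⟩ := h
  induction p with
  | nil => exact .inl .rfl
  | cons hadj _ ih =>
    rcases hGH hadj with hadj | hadj
    · exact (ih hGH).imp hadj.reachable.trans hadj.reachable.trans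
    · rw [edge_adj] at hadj
      obtain ⟨⟨rfl, rfl⟩ | ⟨rfl, rfl⟩, -⟩ := hadj
      · exact .inl .rfl
      · exact .inr .rfl

theorem Connected.of_le_sup_edge (hG : G.Connected) (hGH : G ≤ H ⊔ edge u v)
    (huv : H.Reachable u v) : H.Connected := by
  refine (connected_iff_exists_forall_reachable _).2 ⟨u, fun x => ?_⟩
  rcases (hG.preconnected x u).reachable_or_reachable_of_le_sup_edge hGH with h | h
  · exact h.symm
  · exact (h.trans huv.symm).symm

end SimpleGraph

section RBP

variable {R B P : Finset Pt} {E E' : Finset (Sym2 Pt)} {S : Set Pt} {u v w : Pt}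

theorem induce_graphOf_mono (h : ∀ e ∈ E, (∀ x ∈ e, x ∈ S) → e ∈ E') :
    (graphOf E).induce S ≤ (graphOf E').induce S := fun a b ⟨hne, hab⟩ =>
  ⟨hne, h _ hab fun x hx => by rcases Sym2.mem_iff.1 hx with rfl | rfl <;> simp⟩

theorem induce_graphOf_le_sup_edge (hE : E ⊆ insert s(u, v) E') (hu : u ∈ S) (hv : v ∈ S) :
    (graphOf E).induce S ≤ (graphOf E').induce S ⊔ edge ⟨u, hu⟩ ⟨v, hv⟩ := by
  rintro a b ⟨hne, hab⟩
  rcases Finset.mem_insert.1 (hE hab) with h | h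
  · refine .inr ((edge_adj ..).2 ⟨?_, fun h => hne (congrArg Subtype.val h)⟩)
    rcases Sym2.eq_iff.1 h with ⟨h1, h2⟩ | ⟨h1, h2⟩
    · exact .inl ⟨Subtype.ext h1, Subtype.ext h2⟩
    · exact .inr ⟨Subtype.ext h1, Subtype.ext h2⟩
  · exact .inl ⟨hne, h⟩

theorem IsRBP.symm (h : IsRBP R B P E) : IsRBP B R P E := by
  obtain ⟨hdiag, hmem, hred, hblue⟩ := h
  refine ⟨hdiag, fun e he x hx => ?_, hblue, hred⟩
  have := hmem e he x hx
  simp only [Finset.mem_union] at this ⊢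
  tauto

theorem IsMinRBP.symm (h : IsMinRBP R B P E) : IsMinRBP B R P E :=
  ⟨h.1.symm, fun E' hE' => h.2 E' hE'.symm⟩

theorem IsRBP.insert_erase (hE : IsRBP R B P E) (huv : s(u, v) ∈ E)
    (hu : u ∈ R ∪ P) (hv : v ∈ R ∪ P) (huB : u ∉ B ∪ P ∨ v ∉ B ∪ P)
    (hw : w ∈ R ∪ P) (hwv : w ≠ v)
    (hwu : ((graphOf (E.erase s(u, v))).induce ↑(R ∪ P)).Reachable ⟨w, hw⟩ ⟨u, hu⟩) :
    IsRBP R B P (insert s(w, v) (E.erase s(u, v))) := by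
  obtain ⟨hdiag, hmem, hred, hblue⟩ := hE
  have hsub : E.erase s(u, v) ⊆ insert s(w, v) (E.erase s(u, v)) := Finset.subset_insert _ _
  refine ⟨?_, ?_, ?_, ?_⟩
  · simp only [Finset.mem_insert]
    rintro e (rfl | he)
    · exact Sym2.mk_isDiag_iff.not.2 hwv
    · exact hdiag e (Finset.mem_of_mem_erase he)
  · simp only [Finset.mem_insert]
    rintro e (rfl | he) x hx
    · have hRP : R ∪ P ⊆ R ∪ B ∪ P := Finset.union_subset_union_left Finset.subset_union_left
      rcases Sym2.mem_iff.1 hx with rfl | rfl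
      exacts [hRP hw, hRP hv]
    · exact hmem e (Finset.mem_of_mem_erase he) x hx
  · refine hred.of_le_sup_edge
      (induce_graphOf_le_sup_edge (Finset.subset_insert_iff.2 hsub) hu hv) ?_
    have hwv' : ((graphOf (insert s(w, v) (E.erase s(u, v)))).induce ↑(R ∪ P)).Adj
        ⟨w, hw⟩ ⟨v, hv⟩ := ⟨hwv, Finset.mem_insert_self _ _⟩
    exact (hwu.symm.mono (induce_graphOf_mono fun e he _ => hsub he)).trans hwv'.reachable
  · refine hblue.mono (induce_graphOf_mono fun e he hBP => hsub (Finset.mem_erase.2 ⟨?_, he⟩))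
    rintro rfl
    rcases huB with h | h
    · exact h (by simpa using hBP u (Sym2.mem_mk_left u v))
    · exact h (by simpa using hBP v (Sym2.mem_mk_right u v))

theorem edgeLen_nonneg (e : Sym2 Pt) : 0 ≤ edgeLen e := by
  induction e using Sym2.ind with
  | _ x y => exact (dist_nonneg : 0 ≤ dist x y)

theorem weight_insert_erase_le {E : Finset (Sym2 Pt)} {e f : Sym2 Pt} (he : e ∈ E) :
    weight (insert f (E.erase e)) ≤ weight E - edgeLen e + edgeLen f := by
  have herase : weight (E.erase e) + edgeLen e = weight E := Finset.sum_erase_add _ _ he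
  have hinsert : weight (insert f (E.erase e)) ≤ edgeLen f + weight (E.erase e) := by
    by_cases hf : f ∈ E.erase e
    · rw [Finset.insert_eq_of_mem hf]
      linarith [edgeLen_nonneg f]
    · exact (Finset.sum_insert hf).le
  linarith

theorem IsRBP.exists_insert_erase (hE : IsRBP R B P E) (huv : s(u, v) ∈ E)
    (hu : u ∈ R ∪ P) (hv : v ∈ R ∪ P) (huB : u ∉ B ∪ P)
    (hw : w ∈ R ∪ P) (hwu : w ≠ u) (hwv : w ≠ v) :
    ∃ x, (x = u ∨ x = v) ∧ IsRBP R B P (insert s(w, x) (E.erase s(u, v))) := by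
  rcases (hE.2.2.1.preconnected ⟨w, hw⟩ ⟨u, hu⟩).reachable_or_reachable_of_le_sup_edge
      (induce_graphOf_le_sup_edge (Finset.subset_insert_iff.2 subset_rfl) hu hv) with h | h
  · exact ⟨v, .inr rfl, hE.insert_erase huv hu hv (.inl huB) hw hwv h⟩
  · have hswap : s(u, v) = s(v, u) := Sym2.eq_swap
    rw [hswap] at huv h
    exact ⟨u, .inl rfl, hswap ▸ hE.insert_erase huv hv hu (.inr huB) hw hwu h⟩

theorem IsMinRBP.dist_le_or_dist_le (hE : IsMinRBP R B P E) (huv : s(u, v) ∈ E)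
    (hu : u ∈ R ∪ P) (hv : v ∈ R ∪ P) (huB : u ∉ B ∪ P) (hw : w ∈ R ∪ P) :
    dist u v ≤ dist w u ∨ dist u v ≤ dist w v := by
  by_contra! h
  obtain ⟨hwu, hwv⟩ := h
  have hne_u : w ≠ u := by
    rintro rfl
    exact lt_irrefl _ hwv
  have hne_v : w ≠ v := by
    rintro rfl
    exact lt_irrefl _ (dist_comm u w ▸ hwu)
  obtain ⟨x, hx, hE'⟩ := hE.1.exists_insert_erase huv hu hv huB hw hne_u hne_v
  have hshorter : edgeLen s(w, x) < edgeLen s(u, v) := by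
    rcases hx with rfl | rfl <;> assumption
  linarith [hE.2 _ hE', weight_insert_erase_le (f := s(w, x)) huv]

theorem Crosses.swap_left {u v w x : Pt} (h : Crosses u v w x) : Crosses v u w x := by
  obtain ⟨z, huv, hwx⟩ := h
  exact ⟨z, openSegment_symm ℝ u v ▸ huv, hwx⟩

theorem IsMinRBP.not_crosses {p q o : Pt} {r : ℝ} (hE : IsMinRBP R B P E)
    (huv : s(u, v) ∈ E) (hu : u ∈ R ∪ P) (hv : v ∈ R ∪ P) (huB : u ∉ B ∪ P)
    (hp : p ∈ P) (hq : q ∈ P) (hpq : p ≠ q)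
    (hu' : u ∈ sphere o r) (hv' : v ∈ sphere o r) (hp' : p ∈ sphere o r)
    (hq' : q ∈ sphere o r) :
    ¬ Crosses u v p q := by
  rintro ⟨z, hzuv, hzpq⟩
  have hne_u : ∀ x ∈ P, x ≠ u := fun x hx hxu => huB (Finset.mem_union_right _ (hxu ▸ hx))
  obtain ⟨w, hw, hwu, hwv⟩ := exists_dist_lt_dist_of_mem_sphere hu' hv' hp' hq'
    (openSegment_subset_segment _ _ _ hzuv) hzpq hpq (hne_u p hp) (hne_u q hq)
  have hwP : w ∈ P := by rcases hw with rfl | rfl <;> assumption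
  rcases hE.dist_le_or_dist_le huv hu hv huB (Finset.mem_union_right _ hwP) with h | h <;>
    linarith

end RBP

theorem circle_minRBP_red_blue_edge_crosses_no_purple_chord_general (R B P : Finset Pt)
    (hRB : Disjoint R B) (hRP : Disjoint R P) (hBP : Disjoint B P)
    (ctr : Pt) (r : ℝ)
    (hcirc : ∀ q ∈ R ∪ B ∪ P, dist q ctr = r)
    (E : Finset (Sym2 Pt)) (hE : IsMinRBP R B P E) :
    ∀ u v : Pt, s(u, v) ∈ E →
      ((u ∈ R ∧ v ∈ R ∪ P) ∨ (v ∈ R ∧ u ∈ R ∪ P) ∨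
       (u ∈ B ∧ v ∈ B ∪ P) ∨ (v ∈ B ∧ u ∈ B ∪ P)) →
      ∀ p ∈ P, ∀ p' ∈ P, p ≠ p' → ¬ Crosses u v p p' := by
  intro u v huv hcol p hp q hq hpq
  have hsph : ∀ x ∈ R ∪ B ∪ P, x ∈ sphere ctr r := hcirc
  have hu' := hsph u (hE.1.2.1 _ huv u (Sym2.mem_mk_left u v))
  have hv' := hsph v (hE.1.2.1 _ huv v (Sym2.mem_mk_right u v))
  have hp' := hsph p (Finset.mem_union_right _ hp)
  have hq' := hsph q (Finset.mem_union_right _ hq)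
  have hvu : s(v, u) ∈ E := Sym2.eq_swap ▸ huv
  have hR : ∀ ⦃x⦄, x ∈ R → x ∉ B ∪ P :=
    Finset.disjoint_left.1 (Finset.disjoint_union_right.2 ⟨hRB, hRP⟩)
  have hB : ∀ ⦃x⦄, x ∈ B → x ∉ R ∪ P :=
    Finset.disjoint_left.1 (Finset.disjoint_union_right.2 ⟨hRB.symm, hBP⟩)
  rcases hcol with ⟨hu, hv⟩ | ⟨hv, hu⟩ | ⟨hu, hv⟩ | ⟨hv, hu⟩
  · exact hE.not_crosses huv (Finset.mem_union_left _ hu) hv (hR hu) hp hq hpq hu' hv' hp' hq'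
  · exact fun h => hE.not_crosses hvu (Finset.mem_union_left _ hv) hu (hR hv) hp hq hpq
      hv' hu' hp' hq' h.swap_left
  · exact hE.symm.not_crosses huv (Finset.mem_union_left _ hu) hv (hB hu) hp hq hpq
      hu' hv' hp' hq'
  · exact fun h => hE.symm.not_crosses hvu (Finset.mem_union_left _ hv) hu (hB hv) hp hq hpq
      hv' hu' hp' hq' h.swap_left

/-- if all points lie on a common circle, then in a minimum RBP
spanning graph no red or blue edge crosses the segment joining any pair of purple
points. -/
theorem circle_minRBP_red_blue_edge_crosses_no_purple_chord (R B P : Finset Pt)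
    (hRB : Disjoint R B) (hRP : Disjoint R P) (hBP : Disjoint B P)
    (ctr : Pt) (r : ℝ) (hr : 0 < r)
    (hcirc : ∀ q ∈ R ∪ B ∪ P, dist q ctr = r)
    (E : Finset (Sym2 Pt)) (hE : IsMinRBP R B P E) :
    ∀ u v : Pt, s(u, v) ∈ E →
      ((u ∈ R ∧ v ∈ R ∪ P) ∨ (v ∈ R ∧ u ∈ R ∪ P) ∨
       (u ∈ B ∧ v ∈ B ∪ P) ∨ (v ∈ B ∧ u ∈ B ∪ P)) →
      ∀ p ∈ P, ∀ p' ∈ P, p ≠ p' → ¬ Crosses u v p p' :=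
  circle_minRBP_red_blue_edge_crosses_no_purple_chord_general R B P hRB hRP hBP ctr r hcirc E hE
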